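/- If λ is an eigenvalue of the adjacency matrix A(G_j) of an r_j-regular graph G_j other than r_j, with eigenvector orthogonal to the all-ones vector, then, in the H-join G of regular graphs, extending this eigenvector by zeros on all other blocks gives an eigenvector of A_α(G) with eigenvalue α s_j + α r_j + (1-α) λ, where s_j = Σ_{jl ∈ E(H)} n_l. -/

import Mathlib

/-! In block `i` of the `H`-join, the adjacency operator applied to `f` is the adjacency
operator of `G i` applied to the restriction of `f` to block `i`, plus the total sums of `f` over
the blocks `H`-adjacent to `i`. For the zero extension of `w` these block sums vanish because
`∑ w = 0`, so only the `G j`-block term `λ w` survives, while every vertex of block `j` has degree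
`r_j + s_j`. -/

open Matrix Polynomial

noncomputable def Aalpha {V : Type*} [Fintype V] (G : SimpleGraph V) (α : ℝ) :
    Matrix V V ℝ :=
  letI : DecidableEq V := Classical.decEq V
  letI : DecidableRel G.Adj := fun a b => Classical.dec _
  α • Matrix.diagonal (fun v => (G.degree v : ℝ)) + (1 - α) • G.adjMatrix ℝ

/-- The `H`-join of the family of graphs `G i`. -/
def HJoin {ι : Type*} (H : SimpleGraph ι) {V : ι → Type*} (G : ∀ i, SimpleGraph (V i)) :
    SimpleGraph (Σ i, V i) where
  Adj x y := H.Adj x.1 y.1 ∨ ∃ (i : ι) (a b : V i), x = ⟨i, a⟩ ∧ y = ⟨i, b⟩ ∧ (G i).Adj a b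
  symm := by
    constructor
    rintro ⟨i, a⟩ ⟨j, b⟩ (h | ⟨k, u, v, h1, h2, h3⟩)
    · exact Or.inl h.symm
    · exact Or.inr ⟨k, v, u, h2, h1, h3.symm⟩
  loopless := by
    constructor
    rintro ⟨i, a⟩ (h | ⟨k, u, v, h1, h2, h3⟩)
    · exact H.loopless.irrefl _ h
    · rw [h1] at h2
      have huv : u = v := by simpa using h2
      subst huv
      exact (G k).loopless.irrefl _ h3

namespace HJoin

variable {ι : Type*} (H : SimpleGraph ι) {V : ι → Type*} (G : ∀ i, SimpleGraph (V i))

theorem adj_mk_mk_self {i : ι} {a b : V i} :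
    (HJoin H G).Adj ⟨i, a⟩ ⟨i, b⟩ ↔ (G i).Adj a b := by
  refine ⟨?_, fun h => Or.inr ⟨i, a, b, rfl, rfl, h⟩⟩
  rintro (h | ⟨_, _, _, ⟨⟩, h, hab⟩)
  · exact absurd h (H.loopless.irrefl i)
  · obtain rfl := sigma_mk_injective h
    exact hab

theorem adj_mk_mk_of_ne {i j : ι} (hij : i ≠ j) {a : V i} {b : V j} :
    (HJoin H G).Adj ⟨i, a⟩ ⟨j, b⟩ ↔ H.Adj i j := by
  refine ⟨?_, Or.inl⟩
  rintro (h | ⟨_, _, _, ⟨⟩, ⟨⟩, _⟩)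
  · exact h
  · exact absurd rfl hij

variable [Fintype ι] [DecidableEq ι] [DecidableRel H.Adj] [∀ i, Fintype (V i)]
  [∀ i, DecidableRel (G i).Adj] [DecidableRel (HJoin H G).Adj]

theorem adjMatrix_mulVec_apply {R : Type*} [NonAssocSemiring R] (f : (Σ i, V i) → R)
    (i : ι) (a : V i) :
    ((HJoin H G).adjMatrix R *ᵥ f) ⟨i, a⟩ =
      ((G i).adjMatrix R *ᵥ fun b => f ⟨i, b⟩) a + ∑ l ∈ H.neighborFinset i, ∑ b, f ⟨l, b⟩ := by
  simp only [mulVec, dotProduct, SimpleGraph.adjMatrix_apply, ite_mul, one_mul, zero_mul]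
  rw [Fintype.sum_sigma, ← Finset.add_sum_erase _ _ (Finset.mem_univ i)]
  simp_rw [adj_mk_mk_self]
  congr 1
  rw [SimpleGraph.neighborFinset_eq_filter, Finset.sum_filter,
    ← Finset.sum_erase _ (f := fun l => if H.Adj i l then ∑ b, f ⟨l, b⟩ else 0)
      (if_neg (H.loopless.irrefl i))]
  refine Finset.sum_congr rfl fun l hl => ?_
  simp_rw [adj_mk_mk_of_ne H G (Finset.ne_of_mem_erase hl).symm]
  rw [Finset.sum_ite_irrel, Finset.sum_const_zero]

theorem degree_mk (i : ι) (a : V i) :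
    (HJoin H G).degree ⟨i, a⟩ =
      (G i).degree a + ∑ l ∈ H.neighborFinset i, Fintype.card (V l) := by
  simpa using adjMatrix_mulVec_apply H G (R := ℕ) (Function.const _ 1) i a

end HJoin

theorem Aalpha_mulVec_apply {V : Type*} [Fintype V] (G : SimpleGraph V) [DecidableRel G.Adj]
    (α : ℝ) (f : V → ℝ) (v : V) :
    (Aalpha G α *ᵥ f) v = α * G.degree v * f v + (1 - α) * (G.adjMatrix ℝ *ᵥ f) v := by
  classical
  have hA : Aalpha G α = α • diagonal (fun v => (G.degree v : ℝ)) + (1 - α) • G.adjMatrix ℝ := by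
    unfold Aalpha; convert rfl
  simp [hA, add_mulVec, smul_mulVec, mulVec_diagonal, mul_assoc]

section extendByZero

variable {ι : Type*} [DecidableEq ι] {V : ι → Type*} {R : Type*}

def sigmaExtendByZero [Zero R] (j : ι) (w : V j → R) : (Σ i, V i) → R := fun x =>
  if h : x.1 = j then w (cast (congrArg V h) x.2) else 0

@[simp]
theorem sigmaExtendByZero_apply_self [Zero R] (j : ι) (w : V j → R) (a : V j) :
    sigmaExtendByZero j w ⟨j, a⟩ = w a :=
  dif_pos rfl

theorem sigmaExtendByZero_apply_of_ne [Zero R] {i j : ι} (hij : i ≠ j) (w : V j → R) (a : V i) :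
    sigmaExtendByZero j w ⟨i, a⟩ = 0 :=
  dif_neg hij

theorem sigmaExtendByZero_ne_zero [Zero R] {j : ι} {w : V j → R} (hw : w ≠ 0) :
    sigmaExtendByZero j w ≠ 0 := fun h =>
  hw <| funext fun a => by simpa using congrFun h ⟨j, a⟩

theorem sum_sigmaExtendByZero_mk [AddCommMonoid R] [∀ i, Fintype (V i)] {j : ι} {w : V j → R}
    (hw : ∑ a, w a = 0) (i : ι) : ∑ a, sigmaExtendByZero j w ⟨i, a⟩ = 0 := by
  by_cases hij : i = j
  · subst hij; simpa using hw
  · simp only [sigmaExtendByZero_apply_of_ne hij, Finset.sum_const_zero]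

end extendByZero

theorem Aalpha_HJoin_mulVec_sigmaExtendByZero {ι : Type*} [Fintype ι] [DecidableEq ι]
    (H : SimpleGraph ι) [DecidableRel H.Adj] {V : ι → Type*} [∀ i, Fintype (V i)]
    (G : ∀ i, SimpleGraph (V i)) [∀ i, DecidableRel (G i).Adj] {j : ι} {r : ℕ}
    (hreg : (G j).IsRegularOfDegree r) (α : ℝ) {lam : ℝ} {w : V j → ℝ}
    (heig : (G j).adjMatrix ℝ *ᵥ w = lam • w) (horth : ∑ a, w a = 0) :
    Aalpha (HJoin H G) α *ᵥ sigmaExtendByZero j w =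
      (α * ∑ l ∈ H.neighborFinset j, (Fintype.card (V l) : ℝ) + α * r + (1 - α) * lam) •
        sigmaExtendByZero j w := by
  classical
  funext ⟨i, a⟩
  rw [Aalpha_mulVec_apply, HJoin.adjMatrix_mulVec_apply, HJoin.degree_mk,
    Finset.sum_eq_zero fun l _ => sum_sigmaExtendByZero_mk horth l]
  by_cases hij : i = j
  · subst hij
    simp only [Pi.smul_apply, smul_eq_mul, sigmaExtendByZero_apply_self, heig, hreg a]
    push_cast
    ring
  · simp [sigmaExtendByZero_apply_of_ne hij]

/-- Extending an eigenvector of `A(G_{j0})`, for an eigenvalue `λ` with eigenvector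
orthogonal to the all-ones vector, by zeros on the other blocks of the `H`-join gives an
eigenvector of `A_α(G)` with eigenvalue `α s_{j0} + α r_{j0} + (1-α) λ`. -/
theorem stmt15 (k : ℕ) (H : SimpleGraph (Fin k)) [DecidableRel H.Adj]
    (nn : Fin k → ℕ) (rr : Fin k → ℕ)
    (G : ∀ j : Fin k, SimpleGraph (Fin (nn j))) [∀ j, DecidableRel (G j).Adj]
    (hreg : ∀ j, (G j).IsRegularOfDegree (rr j)) (α : ℝ)
    (j0 : Fin k) (lam : ℝ) (w : Fin (nn j0) → ℝ) (hw : w ≠ 0)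
    (heig : (G j0).adjMatrix ℝ *ᵥ w = lam • w) (horth : ∑ a, w a = 0) :
    let W : (Σ j, Fin (nn j)) → ℝ := fun x =>
      if h : x.1 = j0 then w (cast (congrArg (fun t => Fin (nn t)) h) x.2) else 0
    W ≠ 0 ∧
      Aalpha (HJoin H G) α *ᵥ W =
        (α * (∑ l ∈ H.neighborFinset j0, (nn l : ℝ)) + α * (rr j0 : ℝ) +
            (1 - α) * lam) • W := by
  have h := Aalpha_HJoin_mulVec_sigmaExtendByZero H G (hreg j0) α heig horth
  simp only [Fintype.card_fin] at h
  exact ⟨sigmaExtendByZero_ne_zero hw, h⟩
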